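/- For all natural numbers q ≥ 2 and l, a, b, the number of edges of B_{q,l,a,b} satisfies |E(B_{q,l,a,b})| ≤ q^l · I_{q,a,l+a} · I_{q,b,l+b}, where I_{q,s,n} = ∑_{i=0}^{s} C(n, i)(q-1)^i. -/

import Mathlib

/-- The edge set of the bipartite graph B_{q,l,a,b}: pairs (x, y) where x has length
l + a, y has length l + b, and x and y have a common subsequence of length l. -/
def edgeSet (q l a b : ℕ) : Set (List (Fin q) × List (Fin q)) :=
  {p | p.1.length = l + a ∧ p.2.length = l + b ∧
    ∃ z : List (Fin q), z.length = l ∧ z.Sublist p.1 ∧ z.Sublist p.2}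

/-- I_{q,s,n} = ∑_{i=0}^{s} C(n, i)(q-1)^i. -/
def insNum (q s n : ℕ) : ℕ := ∑ i ∈ Finset.range (s + 1), n.choose i * (q - 1) ^ i

/-!
Every edge `(x, y)` comes from a common subsequence `z` of length `l`, of which `x` and `y` are
supersequences, and there are `q ^ l` choices of `z`. A string `z` has at most
`I_{q,k,|z|+k}` supersequences of length `|z| + k`: splitting off the first letter of a
supersequence of `c :: z` gives `S(c :: z, n + 1) ≤ S(z, n) + (q - 1) S(c :: z, n)`, the same
recursion as Pascal's rule gives for `I`.
-/

theorem insNum_zero_left (q n : ℕ) : insNum q 0 n = 1 := by simp [insNum]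

theorem insNum_succ_succ (q s n : ℕ) :
    insNum q (s + 1) (n + 1) = insNum q (s + 1) n + (q - 1) * insNum q s n := by
  have hshift (i : ℕ) :
      n.choose i * (q - 1) ^ (i + 1) = (q - 1) * (n.choose i * (q - 1) ^ i) := by
    ring
  simp only [insNum, Finset.sum_range_succ' _ (s + 1), Nat.choose_succ_succ, add_mul,
    Finset.sum_add_distrib, Finset.mul_sum, Nat.choose_zero_right, Nat.succ_eq_add_one, hshift]
  ring

theorem pow_le_insNum_self (q n : ℕ) : q ^ n ≤ insNum q n n := by
  rcases q with _ | q
  · cases n <;> simp [insNum]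
  · refine (add_pow q 1 n).trans_le (le_of_eq ?_)
    simp [insNum, mul_comm]

namespace List

variable {α : Type*}

def supersequences (z : List α) (n : ℕ) : Set (List α) := {x | x.length = n ∧ z <+ x}

theorem ncard_supersequences_nil [Fintype α] (n : ℕ) :
    (supersequences ([] : List α) n).ncard = Fintype.card α ^ n := by
  rw [← card_vector, ← Nat.card_eq_fintype_card, ← Nat.card_coe_set_eq]
  simp only [supersequences, nil_sublist, and_true]
  rfl

theorem ncard_supersequences_length_le_one (z : List α) :
    (supersequences z z.length).ncard ≤ 1 := by
  have h : supersequences z z.length ⊆ {z} := fun x hx => (hx.2.eq_of_length hx.1.symm).symm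
  exact (Set.ncard_le_ncard h).trans (Set.ncard_singleton z).le

theorem supersequences_cons_succ (c : α) (z : List α) (n : ℕ) :
    supersequences (c :: z) (n + 1) =
      (c :: ·) '' supersequences z n ∪
        (fun p => p.1 :: p.2) '' ({c}ᶜ ×ˢ supersequences (c :: z) n) := by
  ext x
  rcases x with _ | ⟨d, t⟩
  · simp [supersequences]
  by_cases hd : d = c
  · subst hd
    simp [supersequences, cons_sublist_cons]
  · simp [supersequences, hd, sublist_cons_iff, Ne.symm hd]

theorem ncard_supersequences_cons_succ_le [Fintype α] (c : α) (z : List α) (n : ℕ) :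
    (supersequences (c :: z) (n + 1)).ncard ≤
      (supersequences z n).ncard + (Fintype.card α - 1) * (supersequences (c :: z) n).ncard := by
  have hcons : Function.Injective fun p : α × List α => p.1 :: p.2 :=
    fun p p' h => Prod.ext (cons.inj h).1 (cons.inj h).2
  rw [supersequences_cons_succ]
  refine (Set.ncard_union_le _ _).trans_eq ?_
  rw [Set.ncard_image_of_injective _ cons_injective, Set.ncard_image_of_injective _ hcons,
    Set.ncard_prod, Set.ncard_compl, Set.ncard_singleton, Nat.card_eq_fintype_card]

theorem ncard_supersequences_le [Fintype α] (z : List α) (k : ℕ) :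
    (supersequences z (z.length + k)).ncard ≤ insNum (Fintype.card α) k (z.length + k) := by
  induction k generalizing z with
  | zero => simpa [insNum_zero_left] using ncard_supersequences_length_le_one z
  | succ k ihk =>
    induction z with
    | nil => simpa [ncard_supersequences_nil] using pow_le_insNum_self _ (k + 1)
    | cons c z ihz =>
      have hlen : (c :: z).length + (k + 1) = z.length + (k + 1) + 1 := by
        simp only [length_cons]; omega
      have hlen' : (c :: z).length + k = z.length + (k + 1) := by
        simp only [length_cons]; omega
      rw [hlen, insNum_succ_succ]
      refine (ncard_supersequences_cons_succ_le c z _).trans (add_le_add ihz ?_)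
      exact Nat.mul_le_mul_left _ (hlen' ▸ ihk (c :: z))

end List

theorem edgeSet_eq_iUnion (q l a b : ℕ) :
    edgeSet q l a b =
      ⋃ z : List.Vector (Fin q) l,
        List.supersequences z.toList (l + a) ×ˢ List.supersequences z.toList (l + b) := by
  ext ⟨x, y⟩
  simp only [edgeSet, List.supersequences, Set.mem_ofPred_eq, Set.mem_iUnion, Set.mem_prod]
  constructor
  · rintro ⟨hx, hy, z, hz, hzx, hzy⟩
    exact ⟨⟨z, hz⟩, ⟨hx, hzx⟩, hy, hzy⟩
  · rintro ⟨z, ⟨hx, hzx⟩, hy, hzy⟩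
    exact ⟨hx, hy, z.toList, z.toList_length, hzx, hzy⟩

theorem stmt_4_general (q l a b : ℕ) :
    (edgeSet q l a b).ncard ≤ q ^ l * insNum q a (l + a) * insNum q b (l + b) := by
  have hsuper (z : List.Vector (Fin q) l) (k : ℕ) :
      (List.supersequences z.toList (l + k)).ncard ≤ insNum q k (l + k) := by
    simpa using List.ncard_supersequences_le z.toList k
  calc (edgeSet q l a b).ncard
      ≤ ∑ z : List.Vector (Fin q) l, (List.supersequences z.toList (l + a) ×ˢ
          List.supersequences z.toList (l + b)).ncard :=
        edgeSet_eq_iUnion q l a b ▸ Set.ncard_iUnion_le_of_fintype _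
    _ ≤ ∑ _z : List.Vector (Fin q) l, insNum q a (l + a) * insNum q b (l + b) :=
        Finset.sum_le_sum fun z _ =>
          Set.ncard_prod.trans_le (Nat.mul_le_mul (hsuper z a) (hsuper z b))
    _ = q ^ l * insNum q a (l + a) * insNum q b (l + b) := by
        simp [card_vector, mul_assoc]

/-- |E(B_{q,l,a,b})| ≤ q^l · I_{q,a,l+a} · I_{q,b,l+b}. -/
theorem stmt_4 (q l a b : ℕ) (hq : 2 ≤ q) :
    (edgeSet q l a b).ncard ≤ q ^ l * insNum q a (l + a) * insNum q b (l + b) :=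
  stmt_4_general q l a b
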